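/- Let n ≥ 1, let c : {0,…,n} → ℤ satisfy the tracelessness condition Σ_{m=0}^{n} c(m)·C(n,m) = 0, let V be an invertible U(1)-invariant matrix, and let φ ∈ ℝ. Then Σ_{m=0}^{n} c(m) · Complex.arg(det((e^{iφ}·V)_m)) ≡ Σ_{m=0}^{n} c(m) · Complex.arg(det(V_m)) (mod 2π); i.e., the phase Φ := Σ_m c(m)·θ_m is invariant under global phase transformations V → e^{iφ}V. -/
import Mathlib


open Finset Matrix

noncomputable section

/-- Hamming weight of a basis label. -/
def hw {n : ℕ} (z : Fin n → Bool) : ℕ := (Finset.univ.filter fun i => z i = true).card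

/-- A matrix is U(1)-invariant if it vanishes off the Hamming-weight blocks. -/
def U1Invariant {n : ℕ} (M : Matrix (Fin n → Bool) (Fin n → Bool) ℂ) : Prop :=
  ∀ z z', hw z ≠ hw z' → M z z' = 0

/-- The weight-`m` block `M_m` of a matrix `M`. -/
def block {n : ℕ} (M : Matrix (Fin n → Bool) (Fin n → Bool) ℂ) (m : ℕ) :
    Matrix {z : Fin n → Bool // hw z = m} {z : Fin n → Bool // hw z = m} ℂ :=
  fun a b => M a.1 b.1

/-- `x ≡ y (mod 2π)`. -/
def Mod2Pi (x y : ℝ) : Prop := ∃ j : ℤ, x - y = 2 * Real.pi * j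

/-- Basis labels correspond to subsets of `Fin n`. -/
def hwEquiv (n : ℕ) : (Fin n → Bool) ≃ Finset (Fin n) where
  toFun z := Finset.univ.filter fun i => z i = true
  invFun s := fun i => decide (i ∈ s)
  left_inv z := by funext i; by_cases h : z i <;> simp [h]
  right_inv s := by ext i; simp

lemma card_hw (n m : ℕ) : Fintype.card {z : Fin n → Bool // hw z = m} = n.choose m := by
  have e : {z : Fin n → Bool // hw z = m} ≃ {s : Finset (Fin n) // s.card = m} :=
    (hwEquiv n).subtypeEquiv (fun z => by simp [hw, hwEquiv])
  rw [Fintype.card_congr e, Fintype.card_finset_len, Fintype.card_fin]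

lemma coe_angle_arg_exp (θ : ℝ) :
    (Complex.arg (Complex.exp (θ * Complex.I)) : Real.Angle) = (θ : Real.Angle) := by
  rw [Complex.arg_exp_mul_I, Real.Angle.angle_eq_iff_two_pi_dvd_sub]
  refine ⟨-(toIocDiv (mul_pos two_pos Real.pi_pos) (-Real.pi) θ), ?_⟩
  have := toIocMod_add_toIocDiv_zsmul (mul_pos two_pos Real.pi_pos) (-Real.pi) θ
  push_cast
  rw [zsmul_eq_mul] at this
  linarith

lemma block_eq_toSquareBlock {n : ℕ} (V : Matrix (Fin n → Bool) (Fin n → Bool) ℂ) (m : ℕ) :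
    block V m = V.toSquareBlock hw m := rfl

lemma det_block_ne_zero {n : ℕ} (V : Matrix (Fin n → Bool) (Fin n → Bool) ℂ)
    (hV : IsUnit V) (hU1 : U1Invariant V) (m : ℕ) : (block V m).det ≠ 0 := by
  have hBT : V.BlockTriangular hw := fun i j h => hU1 i j (ne_of_lt h).symm
  have hdet : V.det ≠ 0 := by
    simpa using (Matrix.isUnit_iff_isUnit_det V).mp hV |>.ne_zero
  rw [hBT.det] at hdet
  by_cases hne : Nonempty {z : Fin n → Bool // hw z = m}
  · obtain ⟨z, hz⟩ := hne
    have hm : m ∈ Finset.univ.image (hw (n := n)) :=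
      Finset.mem_image.mpr ⟨z, Finset.mem_univ _, hz⟩
    rw [block_eq_toSquareBlock]
    exact fun h => hdet (Finset.prod_eq_zero hm h)
  · have : IsEmpty {z : Fin n → Bool // hw z = m} := not_nonempty_iff.mp hne
    rw [Matrix.det_isEmpty]; exact one_ne_zero

/-- if `∑_m c(m) C(n,m) = 0` (i.e. `C` is traceless), the phase
`Φ = ∑_m c(m) θ_m` is invariant under a global phase `V → e^{iφ} V`. -/
theorem stmt14 (n : ℕ) (hn : 1 ≤ n) (c : ℕ → ℤ)
    (hc : ∑ m ∈ Finset.range (n+1), c m * (Nat.choose n m : ℤ) = 0)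
    (V : Matrix (Fin n → Bool) (Fin n → Bool) ℂ) (hV : IsUnit V) (hU1 : U1Invariant V)
    (φ : ℝ) :
    Mod2Pi
      (∑ m ∈ Finset.range (n+1), (c m : ℝ) *
        Complex.arg (Matrix.det (block (Complex.exp (Complex.I * (φ : ℂ)) • V) m)))
      (∑ m ∈ Finset.range (n+1), (c m : ℝ) *
        Complex.arg (Matrix.det (block V m))) := by
  set s : ℂ := Complex.exp (Complex.I * (φ : ℂ)) with hs
  -- the scaled block determinant
  have hdet' : ∀ m, (block (s • V) m).det =
      Complex.exp (((n.choose m : ℝ) * φ : ℝ) * Complex.I) * (block V m).det := by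
    intro m
    have hb : block (s • V) m = s • block V m := by
      ext a b; simp [block, Matrix.smul_apply]
    rw [hb, Matrix.det_smul, card_hw]
    congr 1
    rw [hs, ← Complex.exp_nat_mul]
    push_cast
    ring_nf
  -- angle form of each term
  have hterm : ∀ m, (Complex.arg ((block (s • V) m).det) : Real.Angle) =
      (((n.choose m : ℝ) * φ : ℝ) : Real.Angle) +
        (Complex.arg ((block V m).det) : Real.Angle) := by
    intro m
    rw [hdet' m, Complex.arg_mul_coe_angle (Complex.exp_ne_zero _)
      (det_block_ne_zero V hV hU1 m), coe_angle_arg_exp]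
  -- move to Real.Angle
  rw [show Mod2Pi _ _ ↔ _ from Iff.symm Real.Angle.angle_eq_iff_two_pi_dvd_sub]
  have hcoe : ∀ (f : ℕ → ℝ),
      ((∑ m ∈ Finset.range (n+1), (c m : ℝ) * f m : ℝ) : Real.Angle) =
        ∑ m ∈ Finset.range (n+1), (c m) • ((f m : Real.Angle)) := by
    intro f
    rw [← Real.Angle.coe_coeHom, map_sum]
    refine Finset.sum_congr rfl fun m _ => ?_
    rw [Real.Angle.coe_coeHom, ← zsmul_eq_mul, Real.Angle.coe_zsmul]
  rw [hcoe, hcoe]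
  have : ∀ m ∈ Finset.range (n+1),
      (c m) • ((Complex.arg ((block (s • V) m).det) : Real.Angle)) =
        (c m) • (((n.choose m : ℝ) * φ : ℝ) : Real.Angle) +
          (c m) • ((Complex.arg ((block V m).det) : Real.Angle)) := by
    intro m _; rw [hterm m, smul_add]
  rw [Finset.sum_congr rfl this, Finset.sum_add_distrib]
  have hzero : (∑ m ∈ Finset.range (n+1),
      (c m) • (((n.choose m : ℝ) * φ : ℝ) : Real.Angle)) = 0 := by
    rw [← hcoe (fun m => (n.choose m : ℝ) * φ)]
    have : (∑ m ∈ Finset.range (n+1), (c m : ℝ) * ((n.choose m : ℝ) * φ)) =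
        (∑ m ∈ Finset.range (n+1), (c m : ℝ) * (n.choose m : ℝ)) * φ := by
      rw [Finset.sum_mul]; exact Finset.sum_congr rfl fun m _ => by ring
    rw [this]
    have h0 : (∑ m ∈ Finset.range (n+1), (c m : ℝ) * (n.choose m : ℝ)) = 0 := by
      exact_mod_cast congrArg (fun x : ℤ => (x : ℝ)) hc
    rw [h0, zero_mul, Real.Angle.coe_zero]
  rw [hzero, zero_add]
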